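/- The number of T-element subsets of an n×n grid whose every row is nonempty equals Σ_{m=n}^{n²} C(m−n, T−n) · Σ_{i=0}^{n} (−1)^i C(n,i) C(m−i·n−1, n−1), for n ≤ T ≤ n². -/

import Mathlib

/-- The inclusion-exclusion count of `n`-tuples `(x₁,…,xₙ) ∈ {1,…,n}ⁿ` with sum `m`:
`∑ᵢ (−1)ⁱ C(n,i) C(m−i·n−1, n−1)` (a binomial with negative top argument is `0`). -/
def innerCount (n m : ℕ) : ℤ :=
  ∑ i ∈ Finset.range (n + 1),
    (-1 : ℤ) ^ i * (n.choose i : ℤ) *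
      (if i * n + 1 ≤ m then (((m - i * n - 1).choose (n - 1) : ℕ) : ℤ) else 0)

/-- `α(n,T) = ∑_{m=n}^{n²} C(m−n, T−n) · ∑_{i=0}^{n} (−1)ⁱ C(n,i) C(m−i·n−1, n−1)`. -/
def alphaTV (n T : ℕ) : ℤ :=
  ∑ m ∈ Finset.Icc n (n ^ 2), (((m - n).choose (T - n) : ℕ) : ℤ) * innerCount n m

/-!
Sort the admissible sets by their row maxima `g : Fin n → Fin n`. A set with row maxima `g`
consists of the `n` cells `(r, g r)` together with `T - n` of the `∑ r, g r` cells lying strictly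
left of them, so the count is `∑ g, C(∑ r, g r, T - n)`. Grouping the `g` by `m = n + ∑ r, g r`
leaves the number of `n`-tuples in `{0, …, n - 1}` with sum `m - n`, which inclusion–exclusion over
the set of coordinates that are `≥ n` evaluates to `innerCount n m`.
-/

open Finset

theorem card_filter_subset_subset_union {α : Type*} [Fintype α] [DecidableEq α] {s u : Finset α}
    (h : Disjoint s u) {T : ℕ} (hT : #s ≤ T) :
    #{S : Finset α | #S = T ∧ s ⊆ S ∧ S ⊆ s ∪ u} = (#u).choose (T - #s) := by
  rw [← card_powersetCard]
  refine card_nbij' (· \ s) (s ∪ ·) ?_ ?_ ?_ ?_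
  · intro S hS
    simp only [coe_filter, Set.mem_ofPred_eq, mem_univ, true_and] at hS
    obtain ⟨hcard, hsS, hSsu⟩ := hS
    simp only [mem_coe, mem_powersetCard]
    refine ⟨?_, by rw [card_sdiff_of_subset hsS, hcard]⟩
    exact sdiff_le_iff.mpr hSsu
  · intro E hE
    simp only [mem_coe, mem_powersetCard] at hE
    simp only [coe_filter, Set.mem_ofPred_eq, mem_univ, true_and]
    refine ⟨?_, subset_union_left, union_subset_union_right hE.1⟩
    rw [card_union_of_disjoint (h.mono_right hE.1), hE.2]; omega
  · intro S hS
    simp only [coe_filter, Set.mem_ofPred_eq, mem_univ, true_and] at hS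
    exact union_sdiff_of_subset hS.2.1
  · intro E hE
    simp only [mem_coe, mem_powersetCard] at hE
    exact union_sdiff_cancel_left (h.mono_right hE.1)

section RowMax
variable {ι κ : Type*} [LinearOrder κ]

def IsRowMax (S : Finset (ι × κ)) (g : ι → κ) : Prop :=
  (∀ r, (r, g r) ∈ S) ∧ ∀ p ∈ S, p.2 ≤ g p.1

theorem IsRowMax.unique {S : Finset (ι × κ)} {g g' : ι → κ} (h : IsRowMax S g)
    (h' : IsRowMax S g') : g = g' :=
  funext fun r ↦ le_antisymm (h'.2 _ (h.1 r)) (h.2 _ (h'.1 r))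

theorem exists_isRowMax [DecidableEq ι] {S : Finset (ι × κ)} (hS : ∀ r, ∃ c, (r, c) ∈ S) :
    ∃ g, IsRowMax S g := by
  choose x hx hxmax using fun r ↦ exists_max_image {p ∈ S | p.1 = r} Prod.snd <| by
    obtain ⟨c, hc⟩ := hS r
    exact ⟨(r, c), mem_filter.mpr ⟨hc, rfl⟩⟩
  have hxS (r : ι) : x r ∈ S := (mem_filter.mp (hx r)).1
  have hx_fst (r : ι) : (x r).1 = r := (mem_filter.mp (hx r)).2
  refine ⟨fun r ↦ (x r).2, fun r ↦ ?_, fun p hp ↦ hxmax p.1 p (mem_filter.mpr ⟨hp, rfl⟩)⟩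
  rw [show (r, (x r).2) = x r from Prod.ext (hx_fst r).symm rfl]
  exact hxS r

variable [Fintype ι]

def cellsBelow [Fintype κ] (g : ι → κ) : Finset (ι × κ) := {p | p.2 < g p.1}

variable [DecidableEq ι]

def funGraph (g : ι → κ) : Finset (ι × κ) := univ.image fun r ↦ (r, g r)

theorem mem_funGraph {g : ι → κ} {p : ι × κ} : p ∈ funGraph g ↔ p.2 = g p.1 := by
  constructor
  · simp only [funGraph, mem_image, mem_univ, true_and]
    rintro ⟨r, rfl⟩; rfl
  · intro h
    exact mem_image.mpr ⟨p.1, mem_univ _, by rw [← h]⟩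

theorem card_funGraph (g : ι → κ) : #(funGraph g) = Fintype.card ι := by
  rw [funGraph, card_image_of_injective _ fun a b h ↦ congrArg Prod.fst h, card_univ]

variable [Fintype κ]

theorem disjoint_funGraph_cellsBelow (g : ι → κ) : Disjoint (funGraph g) (cellsBelow g) := by
  rw [disjoint_left]
  intro p hp hp'
  rw [mem_funGraph] at hp
  simp [cellsBelow, hp] at hp'

theorem isRowMax_iff {S : Finset (ι × κ)} {g : ι → κ} :
    IsRowMax S g ↔ funGraph g ⊆ S ∧ S ⊆ funGraph g ∪ cellsBelow g := by
  refine and_congr ⟨fun h p hp ↦ ?_, fun h r ↦ h (mem_funGraph.mpr rfl)⟩ ?_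
  · rw [mem_funGraph] at hp
    rw [← Prod.mk.eta (p := p), hp]
    exact h p.1
  · rw [subset_iff]
    refine forall₂_congr fun p _ ↦ ?_
    simp [mem_funGraph, cellsBelow, le_iff_eq_or_lt]

theorem card_filter_rowCovering (T : ℕ) (hT : Fintype.card ι ≤ T) :
    #{S : Finset (ι × κ) | #S = T ∧ ∀ r, ∃ c, (r, c) ∈ S}
      = ∑ g : ι → κ, (#(cellsBelow g)).choose (T - Fintype.card ι) := by
  have fibers : ({S : Finset (ι × κ) | #S = T ∧ ∀ r, ∃ c, (r, c) ∈ S} : Finset _)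
      = univ.biUnion fun g ↦ {S | #S = T ∧ funGraph g ⊆ S ∧ S ⊆ funGraph g ∪ cellsBelow g} := by
    ext S
    simp only [mem_filter, mem_univ, true_and, mem_biUnion, ← isRowMax_iff]
    constructor
    · rintro ⟨hcard, hrows⟩
      obtain ⟨g, hg⟩ := exists_isRowMax hrows
      exact ⟨g, hcard, hg⟩
    · rintro ⟨g, hcard, hg⟩
      exact ⟨hcard, fun r ↦ ⟨g r, hg.1 r⟩⟩
  rw [fibers, card_biUnion]
  · refine sum_congr rfl fun g _ ↦ ?_
    rw [card_filter_subset_subset_union (disjoint_funGraph_cellsBelow g) (by rwa [card_funGraph]),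
      card_funGraph]
  · intro g _ g' _ hne
    refine disjoint_left.mpr fun S hS hS' ↦ hne ?_
    simp only [mem_filter, mem_univ, true_and, ← isRowMax_iff] at hS hS'
    exact hS.2.unique hS'.2

end RowMax

theorem card_cellsBelow_fin {ι : Type*} [Fintype ι] {n : ℕ} (g : ι → Fin n) :
    #(cellsBelow g) = ∑ r, (g r : ℕ) := by
  rw [cellsBelow, card_filter, Fintype.sum_prod_type]
  refine sum_congr rfl fun r _ ↦ ?_
  dsimp only
  rw [← card_filter, filter_gt_eq_Iio, Fin.card_Iio]

section Dice
variable {ι : Type*} [Fintype ι] [DecidableEq ι]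

theorem card_piAntidiag_univ (s : ℕ) :
    #(piAntidiag (univ : Finset ι) s) = (Fintype.card ι + s - 1).choose s := by
  rw [← map_sym_eq_piAntidiag, card_map, sym_univ, card_univ, Sym.card_sym_eq_choose]

theorem card_filter_piAntidiag_forall_le (t : Finset ι) (n s : ℕ) :
    #{f ∈ piAntidiag (univ : Finset ι) s | ∀ i ∈ t, n ≤ f i}
      = if #t * n ≤ s then #(piAntidiag (univ : Finset ι) (s - #t * n)) else 0 := by
  set shift : ι → ℕ := fun i ↦ if i ∈ t then n else 0
  have sum_shift : ∑ i, shift i = #t * n := by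
    simp [shift, sum_ite_mem, univ_inter]
  split_ifs with h
  · refine card_nbij' (· - shift) (· + shift) ?_ ?_ ?_ ?_
    · intro f hf
      simp only [coe_filter, Set.mem_ofPred_eq, mem_piAntidiag, mem_univ, implies_true,
        and_true] at hf
      simp only [mem_coe, mem_piAntidiag, mem_univ, implies_true, and_true, Pi.sub_apply]
      rw [sum_tsub_distrib, hf.1, sum_shift]
      intro i _
      by_cases hi : i ∈ t <;> simp [shift, hi, hf.2]
    · intro g hg
      simp only [mem_coe, mem_piAntidiag, mem_univ, implies_true, and_true] at hg
      simp only [coe_filter, Set.mem_ofPred_eq, mem_piAntidiag, mem_univ, implies_true,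
        and_true, Pi.add_apply]
      refine ⟨?_, fun i hi ↦ by simp [shift, hi]⟩
      rw [sum_add_distrib, hg, sum_shift]; omega
    · intro f hf
      simp only [coe_filter, Set.mem_ofPred_eq] at hf
      ext i
      by_cases hi : i ∈ t <;> simp [shift, hi, hf.2 i]
    · intro g _
      ext i
      simp
  · rw [card_eq_zero, filter_eq_empty_iff]
    intro f hf hle
    rw [mem_piAntidiag] at hf
    refine h (calc #t * n = ∑ _i ∈ t, n := by rw [sum_const, smul_eq_mul]
      _ ≤ ∑ i ∈ t, f i := sum_le_sum hle
      _ ≤ ∑ i, f i := sum_le_sum_of_subset (subset_univ t)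
      _ = s := hf.1)

theorem card_filter_piAntidiag_forall_lt (n s : ℕ) :
    (#{f ∈ piAntidiag (univ : Finset ι) s | ∀ i, f i < n} : ℤ)
      = ∑ i ∈ range (Fintype.card ι + 1), (-1) ^ i * ((Fintype.card ι).choose i : ℤ) *
          ((if i * n ≤ s then (Fintype.card ι + (s - i * n) - 1).choose (s - i * n) else 0 : ℕ)
            : ℤ) := by
  have indicator_eq (f : ι → ℕ) : (if ∀ i, f i < n then 1 else 0 : ℤ)
      = ∑ t ∈ ({i | n ≤ f i} : Finset ι).powerset, (-1) ^ #t := by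
    rw [sum_powerset_neg_one_pow_card]
    simp [filter_eq_empty_iff]
  calc (#{f ∈ piAntidiag (univ : Finset ι) s | ∀ i, f i < n} : ℤ)
      = ∑ f ∈ piAntidiag univ s, ∑ t ∈ ({i | n ≤ f i} : Finset ι).powerset, (-1) ^ #t := by
        rw [card_filter]; push_cast
        exact sum_congr rfl fun f _ ↦ indicator_eq f
    _ = ∑ t ∈ (univ : Finset ι).powerset,
          (-1 : ℤ) ^ #t * #{f ∈ piAntidiag (univ : Finset ι) s | ∀ i ∈ t, n ≤ f i} := by
        rw [sum_comm' (t' := univ.powerset)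
          (s' := fun t ↦ {f ∈ piAntidiag (univ : Finset ι) s | ∀ i ∈ t, n ≤ f i})]
        · simp [mul_comm]
        · intro f t
          simp only [mem_powerset, mem_filter, subset_iff, mem_univ, true_and]
          tauto
    _ = _ := by
        simp_rw [card_filter_piAntidiag_forall_le, card_piAntidiag_univ]
        rw [sum_powerset_apply_card (fun j ↦ (-1 : ℤ) ^ j *
          ((if j * n ≤ s then (Fintype.card ι + (s - j * n) - 1).choose (s - j * n) else 0 : ℕ)
            : ℤ))]
        refine sum_congr rfl fun j _ ↦ ?_
        rw [card_univ, nsmul_eq_mul]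
        ring

end Dice

theorem card_filter_sum_val_eq {ι : Type*} [Fintype ι] [DecidableEq ι] (n s : ℕ) :
    #{g : ι → Fin n | ∑ i, (g i : ℕ) = s}
      = #{f ∈ piAntidiag (univ : Finset ι) s | ∀ i, f i < n} := by
  refine card_nbij (fun g i ↦ g i) ?_ ?_ ?_
  · intro g hg
    simp_all
  · intro g _ g' _ h
    funext i
    exact Fin.ext (congrFun h i)
  · intro f hf
    simp only [coe_filter, mem_piAntidiag, mem_univ, implies_true, and_true] at hf
    exact ⟨fun i ↦ ⟨f i, hf.2 i⟩, by simpa using hf.1, rfl⟩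

theorem innerCount_eq_card {n m : ℕ} (hn : 0 < n) (hm : n ≤ m) :
    innerCount n m = #{g : Fin n → Fin n | ∑ i, (g i : ℕ) = m - n} := by
  rw [card_filter_sum_val_eq, card_filter_piAntidiag_forall_lt, Fintype.card_fin, innerCount]
  refine sum_congr rfl fun i _ ↦ ?_
  -- the guards `i * n + 1 ≤ m` and `i * n ≤ m - n` differ only where the binomial vanishes
  split_ifs with h₁ h₂ h₂
  · rw [Nat.choose_symm_of_eq_add (show n + (m - n - i * n) - 1 = _ + (n - 1) by omega)]
    congr 3; omega
  · rw [Nat.choose_eq_zero_of_lt (n := m - i * n - 1) (k := n - 1) (by omega)]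
  · omega
  · rfl

theorem alphaTV_eq_sum {n : ℕ} (hn : 0 < n) (T : ℕ) :
    alphaTV n T = ∑ g : Fin n → Fin n, ((∑ i, (g i : ℕ)).choose (T - n) : ℤ) := by
  have sum_le (g : Fin n → Fin n) : ∑ i, (g i : ℕ) + n ≤ n ^ 2 := by
    have := sum_le_sum fun i (_ : i ∈ univ) ↦ show (g i : ℕ) + 1 ≤ n from (g i).isLt
    simp only [sum_const, card_univ, Fintype.card_fin, smul_eq_mul, sum_add_distrib,
      mul_one] at this
    rw [sq]; exact this
  rw [← sum_fiberwise_of_maps_to (t := Icc n (n ^ 2)) (g := fun g ↦ ∑ i, (g i : ℕ) + n)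
    fun g _ ↦ mem_Icc.mpr ⟨by omega, sum_le g⟩, alphaTV]
  refine sum_congr rfl fun m hm ↦ ?_
  rw [mem_Icc] at hm
  have fiber : univ.filter (fun g : Fin n → Fin n ↦ ∑ i, (g i : ℕ) + n = m)
      = univ.filter (fun g : Fin n → Fin n ↦ ∑ i, (g i : ℕ) = m - n) := by
    ext g; simp only [mem_filter, mem_univ, true_and]; omega
  rw [innerCount_eq_card hn hm.1, eq_comm, fiber,
    sum_congr rfl fun g hg ↦ by rw [(mem_filter.mp hg).2], sum_const, nsmul_eq_mul, mul_comm]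

open Classical in
theorem card_row_covering_subsets_general (n T : ℕ) (hn : 0 < n) (h1 : n ≤ T) :
    ((Finset.univ.filter (fun S : Finset (Fin n × Fin n) =>
        S.card = T ∧ ∀ r : Fin n, ∃ c : Fin n, (r, c) ∈ S)).card : ℤ)
      = alphaTV n T := by
  have count := card_filter_rowCovering (ι := Fin n) (κ := Fin n) T (by simpa using h1)
  simp only [card_cellsBelow_fin, Fintype.card_fin] at count
  rw [alphaTV_eq_sum hn]
  convert congrArg ((↑) : ℕ → ℤ) count using 1
  · congr -- the filters differ only in their `Decidable` instances
  · push_cast; rfl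

open Classical in
/-- The number of `T`-element subsets of an `n×n` grid whose every row is nonempty
equals `α(n,T)`, for `n ≤ T ≤ n²`. -/
theorem card_row_covering_subsets (n T : ℕ) (hn : 0 < n) (h1 : n ≤ T) (h2 : T ≤ n ^ 2) :
    ((Finset.univ.filter (fun S : Finset (Fin n × Fin n) =>
        S.card = T ∧ ∀ r : Fin n, ∃ c : Fin n, (r, c) ∈ S)).card : ℤ)
      = alphaTV n T :=
  card_row_covering_subsets_general n T hn h1
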